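/- Let Z be a separable real Banach space and let φ : ℓ₁ → Z be a bounded linear surjection. If every bounded linear operator from ker φ into ℓ₂ is 1-summing, then every short exact sequence 0 → ℓ₂ → Y → Z → 0 of real Banach spaces splits. -/

import Mathlib

/-!
Lift `φ` through `ρ` to `Φ : ℓ₁ → Y` (ℓ₁ is projective). On `N = ker φ` the lift takes values in
`ker ρ = j(ℓ₂)`, giving `T : N → ℓ₂`. Being 1-summing, `T` satisfies the 2-summing inequality
against functionals on all of `ℓ₁` (Hahn–Banach), and a second Hahn–Banach argument, in place of
Pietsch's measure, turns this into a positive semidefinite form `B ≤ ‖·‖²` on `ℓ₁` with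
`‖T x‖² ≤ C² B(x, x)`. So `T` factors through the Hilbert space of `B`, where it extends by
orthogonal projection; this gives `S : ℓ₁ → ℓ₂` extending `T`. Then `Φ - j S` vanishes on `ker φ`,
descends to a bounded section `s` of `ρ`, and `j⁻¹ (1 - s ρ)` is the required retraction.
-/

noncomputable section

/-- The real sequence space `ℓ₁(ℕ)`. -/
abbrev ellOne : Type := lp (fun _ : ℕ => ℝ) 1

/-- The real sequence space `ℓ₂(ℕ)`. -/
abbrev ellTwo : Type := lp (fun _ : ℕ => ℝ) 2

/-- A bounded operator `T : X → Y` is 1-summing (absolutely summing). -/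
def OneSumming {X Y : Type*} [NormedAddCommGroup X] [NormedSpace ℝ X]
    [NormedAddCommGroup Y] [NormedSpace ℝ Y] (T : X →L[ℝ] Y) : Prop :=
  ∃ C : ℝ, 0 ≤ C ∧ ∀ (n : ℕ) (x : Fin n → X),
    ∑ k, ‖T (x k)‖ ≤ C * ⨆ ξ : {ξ : X →L[ℝ] ℝ // ‖ξ‖ ≤ 1}, ∑ k, |ξ.1 (x k)|

open scoped lp ENNReal InnerProductSpace

section HilbertFactorization

theorem exists_extension_of_norm_le_norm_hilbert {X H E : Type*}
    [NormedAddCommGroup X] [NormedSpace ℝ X]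
    [NormedAddCommGroup H] [InnerProductSpace ℝ H] [CompleteSpace H]
    [NormedAddCommGroup E] [NormedSpace ℝ E] [CompleteSpace E]
    (ι : X →L[ℝ] H) (N : Submodule ℝ X) (T : N →L[ℝ] E) (c : ℝ)
    (hT : ∀ x : N, ‖T x‖ ≤ c * ‖ι x‖) :
    ∃ S : X →L[ℝ] E, ∀ x : N, S x = T x := by
  -- extend from `ι(N)` to its closure `K`, then precompose the orthogonal projection onto `K`
  set K := (N.map (ι : X →ₗ[ℝ] H)).topologicalClosure
  let e : N →ₗ[ℝ] K := (ι.toLinearMap.comp N.subtype).codRestrict K fun x =>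
    (N.map (ι : X →ₗ[ℝ] H)).le_topologicalClosure ⟨x, x.2, rfl⟩
  have he : DenseRange e := by
    rw [DenseRange, Subtype.dense_iff, ← Set.range_comp]
    intro y hy
    rw [SetLike.mem_coe, ← SetLike.mem_coe, Submodule.topologicalClosure_coe] at hy
    refine closure_mono ?_ hy
    rintro - ⟨x, hx, rfl⟩
    exact ⟨⟨x, hx⟩, rfl⟩
  refine ⟨((T : N →ₗ[ℝ] E).extendOfNorm e).comp (K.orthogonalProjectionOnto.comp ι), fun x => ?_⟩
  have hproj : K.orthogonalProjectionOnto (ι x) = e x :=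
    K.orthogonalProjectionOnto_mem_subspace_eq_self (e x)
  simp only [ContinuousLinearMap.comp_apply, hproj]
  exact LinearMap.extendOfNorm_eq he ⟨c, hT⟩ x

/-- `X` with the semi-inner product given by a bilinear form `B`. -/
def FormSpace {X : Type*} [AddCommGroup X] [Module ℝ X] (_B : X →ₗ[ℝ] X →ₗ[ℝ] ℝ) : Type _ := X

namespace FormSpace

variable {X : Type*} [AddCommGroup X] [Module ℝ X] (B : X →ₗ[ℝ] X →ₗ[ℝ] ℝ)

instance : AddCommGroup (FormSpace B) := inferInstanceAs (AddCommGroup X)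

instance : Module ℝ (FormSpace B) := inferInstanceAs (Module ℝ X)

def equiv : X ≃ₗ[ℝ] FormSpace B := LinearEquiv.refl ℝ X

variable [hB : Fact B.IsPosSemidef]

instance : PreInnerProductSpace.Core ℝ (FormSpace B) where
  inner x y := B ((equiv B).symm x) ((equiv B).symm y)
  conj_inner_symm x y := hB.out.isSymm.eq y x
  re_inner_nonneg x := hB.out.isNonneg.nonneg _
  add_left x y z := by simp
  smul_left x y r := by simp

instance : SeminormedAddCommGroup (FormSpace B) :=
  InnerProductSpace.Core.toSeminormedAddCommGroup (𝕜 := ℝ)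

instance : InnerProductSpace ℝ (FormSpace B) := .ofCore _

theorem inner_equiv (x y : X) : ⟪equiv B x, equiv B y⟫_ℝ = B x y := rfl

theorem norm_equiv_sq (x : X) : ‖equiv B x‖ ^ 2 = B x x := by
  rw [← real_inner_self_eq_norm_sq, inner_equiv]

end FormSpace

theorem exists_extension_of_sq_norm_le_form {X E : Type*}
    [NormedAddCommGroup X] [NormedSpace ℝ X]
    [NormedAddCommGroup E] [NormedSpace ℝ E] [CompleteSpace E]
    (B : X →ₗ[ℝ] X →ₗ[ℝ] ℝ) (hB : B.IsPosSemidef) (hB_le : ∀ x, B x x ≤ ‖x‖ ^ 2)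
    (N : Submodule ℝ X) (T : N →L[ℝ] E) (D : ℝ) (hT : ∀ x : N, ‖T x‖ ^ 2 ≤ D * B x x) :
    ∃ S : X →L[ℝ] E, ∀ x : N, S x = T x := by
  have : Fact B.IsPosSemidef := ⟨hB⟩
  have hbound : ∀ x, ‖FormSpace.equiv B x‖ ≤ 1 * ‖x‖ := fun x => by
    rw [one_mul, ← sq_le_sq₀ (norm_nonneg _) (norm_nonneg _), FormSpace.norm_equiv_sq]
    exact hB_le x
  let ι : X →L[ℝ] UniformSpace.Completion (FormSpace B) :=
    UniformSpace.Completion.toComplL.comp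
      ((FormSpace.equiv B).toLinearMap.mkContinuous 1 hbound)
  refine exists_extension_of_norm_le_norm_hilbert ι N T (√D) fun x => ?_
  have hι : ‖ι x‖ ^ 2 = B x x := by
    simp [ι, FormSpace.norm_equiv_sq]
  rw [← Real.sqrt_sq (norm_nonneg (T x)), ← Real.sqrt_sq (norm_nonneg (ι x)),
    ← Real.sqrt_mul' _ (sq_nonneg _), hι]
  exact Real.sqrt_le_sqrt (hT x)

end HilbertFactorization

section ShiftedInf

variable {V I : Type*} [AddCommGroup V]

/-- The sublinear functional fed to Hahn–Banach: it lies below `p` (empty list) and below `-h i`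
at `-g i` (singleton list), so a linear minorant `m` has `m ≤ p` and `h i ≤ m (g i)`. -/
def shiftedInf (p : V → ℝ) (g : I → V) (h : I → ℝ) (f : V) : ℝ :=
  ⨅ l : List I, p (f + (l.map g).sum) - (l.map h).sum

variable {p : V → ℝ} {g : I → V} {h : I → ℝ}

theorem neg_le_shiftedInf_term (hp_add : ∀ v w, p (v + w) ≤ p v + p w)
    (hsum : ∀ l : List I, (l.map h).sum ≤ p (l.map g).sum) (f : V) (l : List I) :
    -p (-f) ≤ p (f + (l.map g).sum) - (l.map h).sum := by
  have := hp_add (f + (l.map g).sum) (-f)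
  rw [add_neg_cancel_comm] at this
  linarith [hsum l]

theorem shiftedInf_le (hp_add : ∀ v w, p (v + w) ≤ p v + p w)
    (hsum : ∀ l : List I, (l.map h).sum ≤ p (l.map g).sum) (f : V) (l : List I) :
    shiftedInf p g h f ≤ p (f + (l.map g).sum) - (l.map h).sum :=
  ciInf_le ⟨_, Set.forall_mem_range.2 (neg_le_shiftedInf_term hp_add hsum f)⟩ l

theorem neg_le_shiftedInf (hp_add : ∀ v w, p (v + w) ≤ p v + p w)
    (hsum : ∀ l : List I, (l.map h).sum ≤ p (l.map g).sum) (f : V) :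
    -p (-f) ≤ shiftedInf p g h f :=
  le_ciInf (neg_le_shiftedInf_term hp_add hsum f)

theorem shiftedInf_add_le (hp_add : ∀ v w, p (v + w) ≤ p v + p w)
    (hsum : ∀ l : List I, (l.map h).sum ≤ p (l.map g).sum) (f f' : V) :
    shiftedInf p g h (f + f') ≤ shiftedInf p g h f + shiftedInf p g h f' := by
  have key : ∀ l l' : List I, shiftedInf p g h (f + f') ≤
      (p (f + (l.map g).sum) - (l.map h).sum) + (p (f' + (l'.map g).sum) - (l'.map h).sum) := by
    intro l l'
    have h1 := shiftedInf_le hp_add hsum (f + f') (l ++ l')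
    have h2 := hp_add (f + (l.map g).sum) (f' + (l'.map g).sum)
    rw [List.map_append, List.map_append, List.sum_append, List.sum_append,
      add_add_add_comm] at h1
    linarith
  rw [← sub_le_iff_le_add']
  refine le_ciInf fun l' => ?_
  rw [sub_le_comm]
  exact le_ciInf fun l => by linarith [key l l']

theorem shiftedInf_smul_le [Module ℝ V] (hp_add : ∀ v w, p (v + w) ≤ p v + p w)
    (hp_smul : ∀ c : ℝ, 0 < c → ∀ v, p (c • v) = c * p v)
    (hgh_smul : ∀ c : ℝ, 0 < c → ∀ i, ∃ j, g j = c • g i ∧ h j = c * h i)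
    (hsum : ∀ l : List I, (l.map h).sum ≤ p (l.map g).sum) {c : ℝ} (hc : 0 < c) (f : V) :
    shiftedInf p g h (c • f) ≤ c * shiftedInf p g h f := by
  choose σ hσg hσh using hgh_smul c hc
  rw [← div_le_iff₀' hc]
  refine le_ciInf fun l => ?_
  have := shiftedInf_le hp_add hsum (c • f) (l.map σ)
  have hsmul_sum : (l.map fun i => c • g i).sum = c • (l.map g).sum := by
    rw [List.smul_sum, List.map_map]; rfl
  simp only [List.map_map, Function.comp_def, hσg, hσh, List.sum_map_mul_left, hsmul_sum,
    ← smul_add, hp_smul c hc] at this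
  rw [div_le_iff₀' hc, mul_sub]
  exact this

theorem exists_linearMap_le_of_sum_le [Module ℝ V] (hp_add : ∀ v w, p (v + w) ≤ p v + p w)
    (hp_smul : ∀ c : ℝ, 0 < c → ∀ v, p (c • v) = c * p v)
    (hgh_smul : ∀ c : ℝ, 0 < c → ∀ i, ∃ j, g j = c • g i ∧ h j = c * h i)
    (hsum : ∀ l : List I, (l.map h).sum ≤ p (l.map g).sum) :
    ∃ m : V →ₗ[ℝ] ℝ, (∀ v, m v ≤ p v) ∧ ∀ i, h i ≤ m (g i) := by
  have hp_zero : p 0 = 0 := by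
    have := hp_smul 2 two_pos 0
    rw [smul_zero] at this
    linarith
  have hq_smul : ∀ c : ℝ, 0 < c → ∀ f, shiftedInf p g h (c • f) = c * shiftedInf p g h f := by
    intro c hc f
    refine le_antisymm (shiftedInf_smul_le hp_add hp_smul hgh_smul hsum hc f) ?_
    have := shiftedInf_smul_le hp_add hp_smul hgh_smul hsum (inv_pos.2 hc) (c • f)
    rwa [inv_smul_smul₀ hc.ne', le_inv_mul_iff₀ hc] at this
  obtain ⟨m, -, hm⟩ := exists_extension_of_le_sublinear ⊥ (shiftedInf p g h) hq_smul
    (shiftedInf_add_le hp_add hsum) fun x => by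
      rw [Submodule.eq_zero_of_bot_submodule x, LinearPMap.map_zero]
      simpa [hp_zero] using neg_le_shiftedInf hp_add hsum 0
  refine ⟨m, fun v => (hm v).trans ?_, fun i => ?_⟩
  · simpa using shiftedInf_le hp_add hsum v []
  · have := (hm (-g i)).trans (shiftedInf_le hp_add hsum (-g i) [i])
    simp only [map_neg, List.map_cons, List.map_nil, List.sum_cons, List.sum_nil, add_zero,
      neg_add_cancel, hp_zero] at this
    linarith

end ShiftedInf

section SupEllInfty

variable {ι : Type*}

theorem bddAbove_range_ellInfty (f : ℓ^∞(ι, ℝ)) : BddAbove (Set.range f) :=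
  ⟨‖f‖, Set.forall_mem_range.2 fun i =>
    (le_abs_self _).trans (lp.norm_apply_le_norm ENNReal.top_ne_zero f i)⟩

theorem iSup_add_le_ellInfty [Nonempty ι] (f f' : ℓ^∞(ι, ℝ)) :
    ⨆ i, (f + f') i ≤ (⨆ i, f i) + ⨆ i, f' i :=
  ciSup_le fun i => add_le_add (le_ciSup (bddAbove_range_ellInfty f) i)
    (le_ciSup (bddAbove_range_ellInfty f') i)

theorem iSup_smul_ellInfty {c : ℝ} (hc : 0 ≤ c) (f : ℓ^∞(ι, ℝ)) :
    ⨆ i, (c • f) i = c * ⨆ i, f i := by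
  simp [Real.mul_iSup_of_nonneg hc]

end SupEllInfty

theorem le_sq_mul_of_le_mul_sqrt_mul_sqrt {s G C : ℝ} (hs : 0 ≤ s) (hG : 0 ≤ G) (hC : 0 ≤ C)
    (h : s ≤ C * (√s * √G)) : s ≤ C ^ 2 * G := by
  obtain ⟨t, ht, rfl⟩ : ∃ t, 0 ≤ t ∧ s = t ^ 2 := ⟨√s, Real.sqrt_nonneg s, (Real.sq_sqrt hs).symm⟩
  obtain ⟨u, hu, rfl⟩ : ∃ u, 0 ≤ u ∧ G = u ^ 2 := ⟨√G, Real.sqrt_nonneg G, (Real.sq_sqrt hG).symm⟩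
  rw [Real.sqrt_sq ht, Real.sqrt_sq hu] at h
  have : t ≤ C * u := by nlinarith [mul_nonneg hC hu]
  nlinarith [mul_nonneg hC hu]

section DualBall

abbrev DualBall (X : Type*) [NormedAddCommGroup X] [NormedSpace ℝ X] : Type _ :=
  {ξ : X →L[ℝ] ℝ // ‖ξ‖ ≤ 1}

variable {X : Type*} [NormedAddCommGroup X] [NormedSpace ℝ X]

instance : Nonempty (DualBall X) := ⟨⟨0, by simp⟩⟩

theorem DualBall.abs_apply_le_norm (ξ : DualBall X) (x : X) : |ξ.1 x| ≤ ‖x‖ := by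
  simpa using ξ.1.le_of_opNorm_le ξ.2 x

variable (X) in
def dualBallEval : X →ₗ[ℝ] ℓ^∞(DualBall X, ℝ) where
  toFun x := ⟨fun ξ => ξ.1 x, memℓp_infty ⟨‖x‖, Set.forall_mem_range.2 fun ξ => by
    simpa using ξ.abs_apply_le_norm x⟩⟩
  map_add' x y := by ext ξ; exact map_add ξ.1 x y
  map_smul' c x := by ext; simp

@[simp] theorem dualBallEval_apply (x : X) (ξ : DualBall X) : dualBallEval X x ξ = ξ.1 x := rfl

def dualBallForm (m : ℓ^∞(DualBall X, ℝ) →ₗ[ℝ] ℝ) : X →ₗ[ℝ] X →ₗ[ℝ] ℝ :=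
  ((LinearMap.mul ℝ _).compl₁₂ (dualBallEval X) (dualBallEval X)).compr₂ m

theorem dualBallForm_apply (m : ℓ^∞(DualBall X, ℝ) →ₗ[ℝ] ℝ) (x y : X) :
    dualBallForm m x y = m (dualBallEval X x * dualBallEval X y) := rfl

variable {m : ℓ^∞(DualBall X, ℝ) →ₗ[ℝ] ℝ}

theorem isPosSemidef_dualBallForm (hm : ∀ f, m f ≤ ⨆ ξ, f ξ) : (dualBallForm m).IsPosSemidef where
  isSymm := ⟨fun x y => by simp [dualBallForm_apply, mul_comm]⟩
  isNonneg := ⟨fun x => by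
    have hsup : ⨆ ξ, (-(dualBallEval X x * dualBallEval X x)) ξ ≤ 0 :=
      ciSup_le fun ξ => neg_nonpos.2 (mul_self_nonneg (ξ.1 x))
    rw [dualBallForm_apply, ← neg_nonpos, ← map_neg]
    exact (hm _).trans hsup⟩

theorem dualBallForm_self_le (hm : ∀ f, m f ≤ ⨆ ξ, f ξ) (x : X) :
    dualBallForm m x x ≤ ‖x‖ ^ 2 := by
  rw [dualBallForm_apply]
  refine (hm _).trans (ciSup_le fun ξ => ?_)
  rw [lp.infty_coeFn_mul, Pi.mul_apply, dualBallEval_apply, ← sq, sq_le_sq, abs_norm]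
  exact ξ.abs_apply_le_norm x

theorem exists_form_of_sum_sq_norm_le {E : Type*} [NormedAddCommGroup E] [NormedSpace ℝ E]
    (N : Submodule ℝ X) (T : N →L[ℝ] E) (C : ℝ)
    (hT : ∀ (n : ℕ) (x : Fin n → N),
      ∑ k, ‖T (x k)‖ ^ 2 ≤ C ^ 2 * ⨆ ξ : DualBall X, ∑ k, ξ.1 (x k) ^ 2) :
    ∃ B : X →ₗ[ℝ] X →ₗ[ℝ] ℝ, B.IsPosSemidef ∧ (∀ x, B x x ≤ ‖x‖ ^ 2) ∧
      ∀ x : N, ‖T x‖ ^ 2 ≤ C ^ 2 * B x x := by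
  set ev := dualBallEval X
  have hscale : ∀ c : ℝ, 0 < c → ∀ x : N, ∃ y : N,
      C ^ 2 • (ev y * ev y) = c • C ^ 2 • (ev x * ev x) ∧ ‖T y‖ ^ 2 = c * ‖T x‖ ^ 2 := by
    refine fun c hc x => ⟨√c • x, ?_, ?_⟩
    · ext ξ
      simp only [Submodule.coe_smul, map_smul, lp.coeFn_smul, lp.infty_coeFn_mul, Pi.smul_apply,
        Pi.mul_apply, smul_eq_mul]
      linear_combination (C ^ 2 * ev x ξ * ev x ξ) * Real.sq_sqrt hc.le
    · simp only [map_smul, norm_smul, mul_pow, Real.norm_eq_abs, sq_abs, Real.sq_sqrt hc.le]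
  have hsum : ∀ l : List N, (l.map fun x => ‖T x‖ ^ 2).sum ≤
      ⨆ ξ, (l.map fun x : N => C ^ 2 • (ev x * ev x)).sum ξ := by
    intro l
    have key := hT l.length fun k => l[k.1]
    rw [Real.mul_iSup_of_nonneg (sq_nonneg C)] at key
    rw [← Fin.sum_univ_fun_getElem l, ← Fin.sum_univ_fun_getElem l]
    refine key.trans_eq (iSup_congr fun ξ => ?_)
    rw [lp.coeFn_sum, Finset.sum_apply, Finset.mul_sum]
    simp [ev, sq]
  obtain ⟨m, hm_le, hm⟩ := exists_linearMap_le_of_sum_le (p := fun f => ⨆ ξ, f ξ)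
    iSup_add_le_ellInfty (fun c hc => iSup_smul_ellInfty hc.le) hscale hsum
  refine ⟨dualBallForm m, isPosSemidef_dualBallForm hm_le, dualBallForm_self_le hm_le,
    fun x => ?_⟩
  simpa [dualBallForm_apply] using hm x

theorem bddAbove_range_sum_sq_dualBall {n : ℕ} (x : Fin n → X) :
    BddAbove (Set.range fun ξ : DualBall X => ∑ k, ξ.1 (x k) ^ 2) :=
  ⟨∑ k, ‖x k‖ ^ 2, Set.forall_mem_range.2 fun ξ => Finset.sum_le_sum fun k _ =>
    sq_le_sq.2 ((ξ.abs_apply_le_norm (x k)).trans (le_abs_self _))⟩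

theorem OneSumming.exists_sum_sq_norm_le {E : Type*} [NormedAddCommGroup E] [NormedSpace ℝ E]
    {N : Submodule ℝ X} {T : N →L[ℝ] E} (hT : OneSumming T) :
    ∃ C, ∀ (n : ℕ) (x : Fin n → N), ∑ k, ‖T (x k)‖ ^ 2 ≤
      C ^ 2 * ⨆ ξ : DualBall X, ∑ k, ξ.1 (x k) ^ 2 := by
  obtain ⟨C, hC, hsum⟩ := hT
  refine ⟨C, fun n x => ?_⟩
  set a : Fin n → ℝ := fun k => ‖T (x k)‖
  set G := ⨆ ξ : DualBall X, ∑ k, ξ.1 (x k) ^ 2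
  have hG : 0 ≤ G := le_ciSup_of_le (bddAbove_range_sum_sq_dualBall fun k => (x k : X))
    ⟨0, by simp⟩ (by simp)
  -- Cauchy–Schwarz, after extending each functional on `N` to `X` by Hahn–Banach
  have hdual : ∀ η : {η : N →L[ℝ] ℝ // ‖η‖ ≤ 1},
      ∑ k, |η.1 (a k • x k)| ≤ √(∑ k, a k ^ 2) * √G := by
    intro η
    obtain ⟨ξ, hξ, hξ_norm⟩ := exists_extension_norm_eq N η.1
    calc ∑ k, |η.1 (a k • x k)| = ∑ k, a k * |ξ (x k)| := by
          simp [hξ, abs_mul, a]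
      _ ≤ √(∑ k, a k ^ 2) * √(∑ k, |ξ (x k)| ^ 2) := Real.sum_mul_le_sqrt_mul_sqrt _ _ _
      _ ≤ √(∑ k, a k ^ 2) * √G := by
          simp only [sq_abs]
          gcongr
          exact le_ciSup (bddAbove_range_sum_sq_dualBall fun k => (x k : X))
            ⟨ξ, hξ_norm.trans_le η.2⟩
  have key := hsum n fun k => a k • x k
  have hlhs : ∑ k, ‖T (a k • x k)‖ = ∑ k, a k ^ 2 := by
    simp [norm_smul, a, sq]
  rw [hlhs] at key
  exact le_sq_mul_of_le_mul_sqrt_mul_sqrt (Finset.sum_nonneg fun k _ => sq_nonneg _) hG hC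
    (key.trans (mul_le_mul_of_nonneg_left (ciSup_le hdual) hC))

theorem OneSumming.exists_extension {E : Type*} [NormedAddCommGroup E] [NormedSpace ℝ E]
    [CompleteSpace E] {N : Submodule ℝ X} {T : N →L[ℝ] E} (hT : OneSumming T) :
    ∃ S : X →L[ℝ] E, ∀ x : N, S x = T x := by
  obtain ⟨C, hC⟩ := hT.exists_sum_sq_norm_le
  obtain ⟨B, hB, hB_le, hTB⟩ := exists_form_of_sum_sq_norm_le N T C hC
  exact exists_extension_of_sq_norm_le_form B hB hB_le N T _ hTB

end DualBall

section EllOne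

variable {ι Y : Type*} [NormedAddCommGroup Y] [NormedSpace ℝ Y] [CompleteSpace Y]

theorem exists_ellOne_hasSum_smul {y : ι → Y} {M : ℝ} (hy : ∀ i, ‖y i‖ ≤ M) :
    ∃ L : ℓ¹(ι, ℝ) →L[ℝ] Y, ∀ a, HasSum (fun i => a i • y i) (L a) := by
  have hM : ∀ (a : ℓ¹(ι, ℝ)) i, ‖a i • y i‖ ≤ M * ‖a i‖ := fun a i => by
    rw [norm_smul, mul_comm]; exact mul_le_mul_of_nonneg_right (hy i) (norm_nonneg _)
  have hnorm (a : ℓ¹(ι, ℝ)) : HasSum (fun i => M * ‖a i‖) (M * ‖a‖) := by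
    simpa using (lp.hasSum_norm (by simp) a).mul_left M
  have hsum (a : ℓ¹(ι, ℝ)) : Summable fun i => a i • y i :=
    .of_norm_bounded (hnorm a).summable (hM a)
  let L : ℓ¹(ι, ℝ) →ₗ[ℝ] Y :=
    { toFun := fun a => ∑' i, a i • y i
      map_add' := fun a b => by
        simpa [add_smul] using ((hsum a).hasSum.add (hsum b).hasSum).tsum_eq
      map_smul' := fun c a => by
        simpa [smul_smul] using ((hsum a).hasSum.const_smul c).tsum_eq }
  exact ⟨L.mkContinuous M fun a => tsum_of_norm_bounded (hnorm a) (hM a),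
    fun a => (hsum a).hasSum⟩

theorem exists_ellOne_lift {Z : Type*} [NormedAddCommGroup Z] [NormedSpace ℝ Z] [CompleteSpace Z]
    (φ : ℓ¹(ι, ℝ) →L[ℝ] Z) {ρ : Y →L[ℝ] Z} (hρ : Function.Surjective ρ) :
    ∃ Φ : ℓ¹(ι, ℝ) →L[ℝ] Y, ρ.comp Φ = φ := by
  classical
  obtain ⟨c, hc_pos, hc⟩ := ρ.exists_preimage_norm_le hρ
  choose y hyρ hy using fun i => hc (φ (lp.single 1 i 1))
  obtain ⟨L, hL⟩ := exists_ellOne_hasSum_smul (M := c * ‖φ‖) fun i => (hy i).trans <| by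
    gcongr
    simpa [lp.norm_single] using φ.le_opNorm (lp.single 1 i 1)
  refine ⟨L, ContinuousLinearMap.ext fun a => ((hL a).mapL ρ).unique ?_⟩
  convert (lp.hasSum_single ENNReal.one_ne_top a).mapL φ using 2 with i
  rw [map_smul, hyρ, ← map_smul, ← lp.single_smul]
  simp

end EllOne

theorem ContinuousLinearMap.exists_comp_eq_of_ker_le {E F G : Type*}
    [NormedAddCommGroup E] [NormedSpace ℝ E] [CompleteSpace E]
    [NormedAddCommGroup F] [NormedSpace ℝ F] [CompleteSpace F]
    [NormedAddCommGroup G] [NormedSpace ℝ G]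
    {φ : E →L[ℝ] F} (hφ : Function.Surjective φ) {Ψ : E →L[ℝ] G}
    (h : LinearMap.ker (φ : E →ₗ[ℝ] F) ≤ LinearMap.ker (Ψ : E →ₗ[ℝ] G)) :
    ∃ s : F →L[ℝ] G, s.comp φ = Ψ := by
  let s : F →ₗ[ℝ] G := (LinearMap.ker (φ : E →ₗ[ℝ] F)).liftQ Ψ h ∘ₗ
    ((φ : E →ₗ[ℝ] F).quotKerEquivOfSurjective hφ).symm
  have hs : ∀ x, s (φ x) = Ψ x := fun x => by
    rw [LinearMap.comp_apply, LinearEquiv.coe_coe, show φ x = (φ : E →ₗ[ℝ] F) x from rfl,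
      LinearMap.quotKerEquivOfSurjective_symm_apply]
    rfl
  have hs_cont : Continuous s :=
    (φ.isQuotientMap hφ).continuous_iff.2 (by convert Ψ.continuous; ext x; exact hs x)
  exact ⟨⟨s, hs_cont⟩, ContinuousLinearMap.ext hs⟩

section ClosedEmbedding

variable {V W Y : Type*} [NormedAddCommGroup V] [NormedSpace ℝ V] [CompleteSpace V]
  [NormedAddCommGroup W] [NormedSpace ℝ W] [NormedAddCommGroup Y] [NormedSpace ℝ Y]
  [CompleteSpace Y] {j : V →L[ℝ] Y}

theorem exists_comp_eq_of_range_subset (hj : Function.Injective j)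
    (hj_closed : IsClosed (Set.range j)) {A : W →L[ℝ] Y} (hA : ∀ w, A w ∈ Set.range j) :
    ∃ A' : W →L[ℝ] V, j.comp A' = A := by
  let e := j.equivRange hj hj_closed
  refine ⟨(e.symm : LinearMap.range (j : V →ₗ[ℝ] Y) →L[ℝ] V).comp
    (A.codRestrict (LinearMap.range (j : V →ₗ[ℝ] Y)) hA), ?_⟩
  ext w
  exact congrArg Subtype.val (e.apply_symm_apply (A.codRestrict _ hA w))

theorem exists_retraction_of_section (hj : Function.Injective j)
    (hj_closed : IsClosed (Set.range j)) {Z : Type*} [NormedAddCommGroup Z] [NormedSpace ℝ Z]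
    {ρ : Y →L[ℝ] Z} (hker : (LinearMap.ker (ρ : Y →ₗ[ℝ] Z) : Set Y) = Set.range j)
    (s : Z →L[ℝ] Y) (hs : ∀ z, ρ (s z) = z) :
    ∃ R : Y →L[ℝ] V, ∀ v, R (j v) = v := by
  obtain ⟨R, hR⟩ := exists_comp_eq_of_range_subset hj hj_closed
    (A := ContinuousLinearMap.id ℝ Y - s.comp ρ) fun y => by
      rw [← hker]
      simp [hs]
  refine ⟨R, fun v => hj ?_⟩
  have hρj : ρ (j v) = 0 := (Set.ext_iff.1 hker (j v)).2 ⟨v, rfl⟩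
  simpa [hρj] using congr($hR (j v))

end ClosedEmbedding

theorem gt_implies_splitting_general (Z : Type*) [NormedAddCommGroup Z] [NormedSpace ℝ Z]
    [CompleteSpace Z]
    (φ : ellOne →L[ℝ] Z) (hφ : Function.Surjective φ)
    (hGT : ∀ T : (LinearMap.ker (φ : ellOne →ₗ[ℝ] Z)) →L[ℝ] ellTwo, OneSumming T) :
    ∀ (Y : Type) (_ : NormedAddCommGroup Y) (_ : NormedSpace ℝ Y)
      (_ : CompleteSpace Y) (j : ellTwo →L[ℝ] Y) (ρ : Y →L[ℝ] Z),
      Function.Injective j → IsClosed (Set.range j) → Function.Surjective ρ →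
      (LinearMap.ker (ρ : Y →ₗ[ℝ] Z) : Set Y) = Set.range j →
      ∃ R : Y →L[ℝ] ellTwo, ∀ v : ellTwo, R (j v) = v := by
  intro Y _ _ _ j ρ hj hj_closed hρ hker
  have hρ_eq_zero : ∀ y, ρ y = 0 ↔ y ∈ Set.range j := fun y => by rw [← hker]; rfl
  obtain ⟨Φ, hΦ⟩ := exists_ellOne_lift φ hρ
  obtain ⟨T, hT⟩ := exists_comp_eq_of_range_subset hj hj_closed
    (A := Φ.comp (LinearMap.ker (φ : ellOne →ₗ[ℝ] Z)).subtypeL) fun x =>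
      (hρ_eq_zero _).1 (by simpa using congr($hΦ x).trans x.2)
  obtain ⟨S, hS⟩ := (hGT T).exists_extension
  obtain ⟨s, hs⟩ := φ.exists_comp_eq_of_ker_le hφ (Ψ := Φ - j.comp S) fun x hx => by
    simpa [hS ⟨x, hx⟩, sub_eq_zero] using congr($hT ⟨x, hx⟩).symm
  refine exists_retraction_of_section hj hj_closed hker s fun z => ?_
  obtain ⟨x, rfl⟩ := hφ z
  have hρj : ρ (j (S x)) = 0 := (hρ_eq_zero _).2 ⟨_, rfl⟩
  simpa [hρj, ← ContinuousLinearMap.comp_apply ρ Φ, hΦ] using congr(ρ ($hs x))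

/-- If every bounded operator `ker φ → ℓ₂` is 1-summing, then every short exact
sequence `0 → ℓ₂ → Y → Z → 0` splits. -/
theorem gt_implies_splitting (Z : Type*) [NormedAddCommGroup Z] [NormedSpace ℝ Z]
    [CompleteSpace Z] [TopologicalSpace.SeparableSpace Z]
    (φ : ellOne →L[ℝ] Z) (hφ : Function.Surjective φ)
    (hGT : ∀ T : (LinearMap.ker (φ : ellOne →ₗ[ℝ] Z)) →L[ℝ] ellTwo, OneSumming T) :
    ∀ (Y : Type) (_ : NormedAddCommGroup Y) (_ : NormedSpace ℝ Y)
      (_ : CompleteSpace Y) (j : ellTwo →L[ℝ] Y) (ρ : Y →L[ℝ] Z),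
      Function.Injective j → IsClosed (Set.range j) → Function.Surjective ρ →
      (LinearMap.ker (ρ : Y →ₗ[ℝ] Z) : Set Y) = Set.range j →
      ∃ R : Y →L[ℝ] ellTwo, ∀ v : ellTwo, R (j v) = v :=
  gt_implies_splitting_general Z φ hφ hGT
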